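/- Let n₀ be the smallest index with T_{n₀−1} > 1. Then the partial products Π_{k=n₀}^{n} μ_k tend to +∞ as n → ∞; in particular, for every choice of the constants A, C, C₁, C₂, ε > 0, the products Π_{k=n₀}^{n} μ_k do not converge to 0. -/
import Mathlib


open Filter

noncomputable section

/-- `T_n = C_T n^{1+β}`. -/
def Tsched (C_T β : ℝ) (n : ℕ) : ℝ := C_T * (n : ℝ) ^ (1 + β)

/-- the faster-decreasing schedule `a_n = A (log T_n)^{−(1+ε)/2}`. -/
def aSeqEps (A C_T β ε : ℝ) (n : ℕ) : ℝ :=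
  A * Real.log (Tsched C_T β n) ^ (-(1 + ε) / 2)

/-- the contraction coefficient
`μ_n = C e^{C₁/a_n²} e^{−e^{−C₂/a_n²}(T_n − T_{n−1})}`. -/
def muSeq (A C_T β ε C C₁ C₂ : ℝ) (n : ℕ) : ℝ :=
  C * Real.exp (C₁ / aSeqEps A C_T β ε n ^ 2) *
    Real.exp (-Real.exp (-C₂ / aSeqEps A C_T β ε n ^ 2) * (Tsched C_T β n - Tsched C_T β (n - 1)))

/-- If a real sequence tends to infinity, so do its partial sums over `Icc m n`. -/
lemma sum_Icc_tendsto_atTop_aux {f : ℕ → ℝ} (m : ℕ) (h : Tendsto f atTop atTop) :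
    Tendsto (fun n => ∑ k ∈ Finset.Icc m n, f k) atTop atTop := by
  obtain ⟨N, hN⟩ := eventually_atTop.mp (h.eventually_ge_atTop 1)
  set M := max m N with hM
  have hbound : Tendsto (fun n : ℕ =>
      (∑ k ∈ Finset.Icc m M, f k) + ((n : ℝ) - (M : ℝ))) atTop atTop := by
    apply tendsto_atTop_add_const_left
    exact tendsto_atTop_add_const_right _ _ tendsto_natCast_atTop_atTop
  refine tendsto_atTop_mono' atTop ?_ hbound
  filter_upwards [eventually_ge_atTop M] with n hn
  have hsplit : Finset.Icc m n = Finset.Icc m M ∪ Finset.Ioc M n := by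
    ext k
    simp only [Finset.mem_Icc, Finset.mem_union, Finset.mem_Ioc]
    omega
  have hdisj : Disjoint (Finset.Icc m M) (Finset.Ioc M n) := by
    simp only [Finset.disjoint_left, Finset.mem_Icc, Finset.mem_Ioc]
    intro k hk hk'
    omega
  rw [hsplit, Finset.sum_union hdisj]
  have h1 : ∀ k ∈ Finset.Ioc M n, (1 : ℝ) ≤ f k := by
    intro k hk
    exact hN k (le_of_lt (lt_of_le_of_lt (le_max_right m N) (Finset.mem_Ioc.mp hk).1))
  have h2 : ((Finset.Ioc M n).card : ℝ) • (1 : ℝ) ≤ ∑ k ∈ Finset.Ioc M n, f k := by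
    have := Finset.card_nsmul_le_sum (Finset.Ioc M n) f 1 h1
    simpa using this
  have h3 : (Finset.Ioc M n).card = n - M := Nat.card_Ioc M n
  have h4 : ((n - M : ℕ) : ℝ) = (n : ℝ) - (M : ℝ) := Nat.cast_sub hn
  simp only [smul_eq_mul, mul_one] at h2
  rw [h3, h4] at h2
  linarith

/-- `log μ_k → ∞`. -/
lemma log_muSeq_tendsto_atTop (A C_T β ε C C₁ C₂ : ℝ)
    (hA : 0 < A) (hCT : 0 < C_T) (hβ : 0 < β) (hε : 0 < ε)
    (hC : 0 < C) (hC₁ : 0 < C₁) (hC₂ : 0 < C₂) :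
    Tendsto (fun k : ℕ => Real.log (muSeq A C_T β ε C C₁ C₂ k)) atTop atTop := by
  have hT : Tendsto (fun k : ℕ => Tsched C_T β k) atTop atTop := by
    have h1 : Tendsto (fun k : ℕ => ((k : ℝ)) ^ (1 + β)) atTop atTop :=
      (tendsto_rpow_atTop (by linarith)).comp tendsto_natCast_atTop_atTop
    simpa [Tsched] using h1.const_mul_atTop hCT
  have hlogT : Tendsto (fun k : ℕ => Real.log (Tsched C_T β k)) atTop atTop :=
    Real.tendsto_log_atTop.comp hT
  have hg : Tendsto (fun k : ℕ => Real.log (Tsched C_T β k) ^ (1 + ε)) atTop atTop :=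
    (tendsto_rpow_atTop (by linarith)).comp hlogT
  have hgε : Tendsto (fun k : ℕ => Real.log (Tsched C_T β k) ^ ε) atTop atTop :=
    (tendsto_rpow_atTop hε).comp hlogT
  -- the lower-bound sequence
  have hbound : Tendsto (fun k : ℕ =>
      (Real.log C - 1) + (C₁ / A ^ 2) * Real.log (Tsched C_T β k) ^ (1 + ε)) atTop atTop := by
    apply tendsto_atTop_add_const_left
    exact hg.const_mul_atTop (by positivity)
  refine tendsto_atTop_mono' atTop ?_ hbound
  filter_upwards [hlogT.eventually_ge_atTop 1, hgε.eventually_ge_atTop (A ^ 2 / C₂)]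
    with k hk1 hk2
  set x := Real.log (Tsched C_T β k) with hxdef
  have hx0 : (0 : ℝ) < x := lt_of_lt_of_le one_pos hk1
  have hTk : (0 : ℝ) < Tsched C_T β k := by
    by_contra hcon
    push_neg at hcon
    have : Real.log (Tsched C_T β k) = 0 := Real.log_eq_zero.mpr (Or.inl (le_antisymm hcon ?_))
    · rw [← hxdef] at this; linarith
    · unfold Tsched; positivity
  have hTk1 : (0 : ℝ) ≤ Tsched C_T β (k - 1) := by unfold Tsched; positivity
  -- compute a_k^2
  have ha2 : aSeqEps A C_T β ε k ^ 2 = A ^ 2 * (x ^ (1 + ε))⁻¹ := by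
    unfold aSeqEps
    rw [← hxdef, mul_pow]
    congr 1
    rw [← Real.rpow_natCast (x ^ (-(1 + ε) / 2)) 2, ← Real.rpow_mul hx0.le]
    rw [show -(1 + ε) / 2 * ((2 : ℕ) : ℝ) = -(1 + ε) by push_cast; ring]
    rw [Real.rpow_neg hx0.le]
  have hxp : (0 : ℝ) < x ^ (1 + ε) := Real.rpow_pos_of_pos hx0 _
  have hdiv : ∀ c : ℝ, c / aSeqEps A C_T β ε k ^ 2 = c / A ^ 2 * x ^ (1 + ε) := by
    intro c
    rw [ha2]
    field_simp
  -- log μ_k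
  have hlogμ : Real.log (muSeq A C_T β ε C C₁ C₂ k) =
      Real.log C + C₁ / A ^ 2 * x ^ (1 + ε) -
        Real.exp (-(C₂ / A ^ 2 * x ^ (1 + ε))) * (Tsched C_T β k - Tsched C_T β (k - 1)) := by
    unfold muSeq
    rw [Real.log_mul (by positivity) (Real.exp_ne_zero _),
      Real.log_mul hC.ne' (Real.exp_ne_zero _), Real.log_exp, Real.log_exp]
    rw [hdiv C₁, hdiv (-C₂)]
    rw [show -C₂ / A ^ 2 * x ^ (1 + ε) = -(C₂ / A ^ 2 * x ^ (1 + ε)) by ring]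
    ring
  rw [hlogμ]
  -- bound the last term by 1
  have hxsplit : x ^ (1 + ε) = x * x ^ ε := by
    rw [Real.rpow_add hx0, Real.rpow_one]
  have hc2 : (1 : ℝ) ≤ C₂ / A ^ 2 * x ^ ε := by
    have h' := (div_le_iff₀ hC₂).mp hk2
    rw [show C₂ / A ^ 2 * x ^ ε = C₂ * x ^ ε / A ^ 2 by ring,
      le_div_iff₀ (by positivity : (0:ℝ) < A ^ 2), one_mul]
    nlinarith
  have hxle : x ≤ C₂ / A ^ 2 * x ^ (1 + ε) := by
    rw [hxsplit]
    calc x = x * 1 := (mul_one x).symm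
    _ ≤ x * (C₂ / A ^ 2 * x ^ ε) := by
        apply mul_le_mul_of_nonneg_left hc2 hx0.le
    _ = C₂ / A ^ 2 * (x * x ^ ε) := by ring
  have hD : Tsched C_T β k - Tsched C_T β (k - 1) ≤ Real.exp (C₂ / A ^ 2 * x ^ (1 + ε)) := by
    have h1 : Tsched C_T β k - Tsched C_T β (k - 1) ≤ Tsched C_T β k := by linarith
    have h2 : Tsched C_T β k = Real.exp x := (Real.exp_log hTk).symm
    calc Tsched C_T β k - Tsched C_T β (k - 1) ≤ Real.exp x := h2 ▸ h1
    _ ≤ Real.exp (C₂ / A ^ 2 * x ^ (1 + ε)) := Real.exp_le_exp.mpr hxle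
  have hterm : Real.exp (-(C₂ / A ^ 2 * x ^ (1 + ε))) *
      (Tsched C_T β k - Tsched C_T β (k - 1)) ≤ 1 := by
    calc Real.exp (-(C₂ / A ^ 2 * x ^ (1 + ε))) * (Tsched C_T β k - Tsched C_T β (k - 1))
        ≤ Real.exp (-(C₂ / A ^ 2 * x ^ (1 + ε))) * Real.exp (C₂ / A ^ 2 * x ^ (1 + ε)) :=
          mul_le_mul_of_nonneg_left hD (Real.exp_nonneg _)
    _ = 1 := by rw [← Real.exp_add]; simp
  linarith

/-- with `n₀` the smallest index with `T_{n₀−1} > 1`, the partial products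
`Π_{k=n₀}^n μ_k` tend to `+∞`; in particular they do not converge to `0`. -/
theorem muSeq_prod_tendsto_atTop (A C_T β ε C C₁ C₂ : ℝ)
    (hA : 0 < A) (hCT : 0 < C_T) (hβ : 0 < β) (hε : 0 < ε)
    (hC : 0 < C) (hC₁ : 0 < C₁) (hC₂ : 0 < C₂) :
    Tendsto (fun n : ℕ =>
        ∏ k ∈ Finset.Icc (sInf {m : ℕ | 1 < Tsched C_T β (m - 1)}) n,
          muSeq A C_T β ε C C₁ C₂ k) atTop atTop ∧
      ¬ Tendsto (fun n : ℕ =>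
        ∏ k ∈ Finset.Icc (sInf {m : ℕ | 1 < Tsched C_T β (m - 1)}) n,
          muSeq A C_T β ε C C₁ C₂ k) atTop (nhds 0) := by
  set n₀ := sInf {m : ℕ | 1 < Tsched C_T β (m - 1)}
  have hμpos : ∀ k, 0 < muSeq A C_T β ε C C₁ C₂ k := by
    intro k
    unfold muSeq
    positivity
  have hprod : ∀ n : ℕ, ∏ k ∈ Finset.Icc n₀ n, muSeq A C_T β ε C C₁ C₂ k =
      Real.exp (∑ k ∈ Finset.Icc n₀ n, Real.log (muSeq A C_T β ε C C₁ C₂ k)) := by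
    intro n
    rw [Real.exp_sum]
    exact (Finset.prod_congr rfl fun k _ => (Real.exp_log (hμpos k)).symm)
  have hsum : Tendsto (fun n : ℕ =>
      ∑ k ∈ Finset.Icc n₀ n, Real.log (muSeq A C_T β ε C C₁ C₂ k)) atTop atTop :=
    sum_Icc_tendsto_atTop_aux n₀
      (log_muSeq_tendsto_atTop A C_T β ε C C₁ C₂ hA hCT hβ hε hC hC₁ hC₂)
  have hmain : Tendsto (fun n : ℕ =>
      ∏ k ∈ Finset.Icc n₀ n, muSeq A C_T β ε C C₁ C₂ k) atTop atTop := by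
    have heq : (fun n : ℕ => ∏ k ∈ Finset.Icc n₀ n, muSeq A C_T β ε C C₁ C₂ k) =
        Real.exp ∘ (fun n : ℕ =>
          ∑ k ∈ Finset.Icc n₀ n, Real.log (muSeq A C_T β ε C C₁ C₂ k)) :=
      funext fun n => hprod n
    rw [heq]
    exact Real.tendsto_exp_atTop.comp hsum
  exact ⟨hmain, not_tendsto_nhds_of_tendsto_atTop hmain 0⟩
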